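/- Let $F : \overline{\Omega} \to \overline{D}$ be a bijection between the closure of a bounded simply connected smooth plane domain $\Omega$ and the closed unit disc, holomorphic on $\Omega$ (identifying $\mathbb{R}^2 \cong \mathbb{C}$), with $F(\partial\Omega) = \partial D$ and $F'(z) \neq 0$ on $\overline{\Omega}$. Suppose the Poisson kernels satisfy the transformation rule $P(x,z) = P_0(F(x), F(z)) \cdot |F'(z)|$ for $x \in \Omega$, $z \in \partial\Omega$. If $p, \widetilde{p} \in \Omega$, $a, b \neq 0$, and $a P(p, z_\ell) = b P(\widetilde{p}, z_\ell)$ at three distinct boundary points $z_1, z_2, z_3 \in \partial\Omega$, then $p = \widetilde{p}$. -/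

import Mathlib

/-! Through the conformal map `F`, the transformation rule turns the three conditions on
`∂Ω` into `a P₀(u, w) = b P₀(v, w)` at three distinct points `w` of the unit circle, with
`u = F p`, `v = F p̃`. Cross-multiplying and using `w w̄ = 1`, each condition says that `w` is a
root of one quadratic polynomial; having three roots, it vanishes. Its coefficients give
`A v = B u` and `A (|v|² + 1) = B (|u|² + 1)` with `A = a (1 - |u|²)`, `B = b (1 - |v|²)`,
which force `A = B` (otherwise `|u| |v| = 1`), hence `u = v`, and `p = p̃` by injectivity. -/

/-- Poisson kernel of the unit disc, with `ℝ² ≅ ℂ`. -/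
noncomputable def discPoisson (x z : ℂ) : ℝ :=
  (1 / (2 * Real.pi)) * (1 - ‖x‖ ^ 2) / ‖x - z‖ ^ 2

open Complex ComplexConjugate Metric

theorem eq_zero_of_quadratic_eq_zero_of_injective {R : Type*} [CommRing R] [IsDomain R]
    {α β γ : R} {x : Fin 3 → R} (hx : Function.Injective x)
    (h : ∀ i, α * x i ^ 2 + β * x i + γ = 0) : α = 0 ∧ β = 0 ∧ γ = 0 := by
  have hsum : ∀ i j, i ≠ j → α * (x i + x j) + β = 0 := fun i j hij =>
    (mul_eq_zero.mp (by linear_combination h i - h j)).resolve_left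
      (sub_ne_zero.mpr (hx.ne hij))
  have hα : α = 0 := by
    refine (mul_eq_zero.mp ?_).resolve_right (sub_ne_zero.mpr (hx.ne (by decide : (1 : Fin 3) ≠ 2)))
    linear_combination hsum 0 1 (by decide) - hsum 0 2 (by decide)
  have hβ : β = 0 := by simpa [hα] using hsum 0 1 (by decide)
  exact ⟨hα, hβ, by simpa [hα, hβ] using h 0⟩

theorem mul_norm_sub_sq_of_norm_eq_one {v w : ℂ} (hw : ‖w‖ = 1) :
    w * (‖v - w‖ : ℂ) ^ 2 = -conj v * w ^ 2 + ((‖v‖ : ℂ) ^ 2 + 1) * w - v := by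
  have hww : w * conj w = 1 := by rw [mul_conj', hw]; norm_num
  rw [← mul_conj', map_sub]
  linear_combination w * mul_conj' v + (w - v) * hww

theorem mul_norm_sub_sq_eq_of_discPoisson_eq {u v w : ℂ} (hu : u ≠ w) (hv : v ≠ w) {a b : ℝ}
    (h : a * discPoisson u w = b * discPoisson v w) :
    a * (1 - ‖u‖ ^ 2) * ‖v - w‖ ^ 2 = b * (1 - ‖v‖ ^ 2) * ‖u - w‖ ^ 2 := by
  have hu' : ‖u - w‖ ≠ 0 := norm_ne_zero_iff.mpr (sub_ne_zero.mpr hu)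
  have hv' : ‖v - w‖ ≠ 0 := norm_ne_zero_iff.mpr (sub_ne_zero.mpr hv)
  unfold discPoisson at h
  field_simp at h
  linear_combination h

theorem eq_of_mul_eq_of_mul_norm_sq_add_one_eq {u v : ℂ} (hu : ‖u‖ < 1) (hv : ‖v‖ < 1)
    {A B : ℝ} (hA : A ≠ 0) (hB : B ≠ 0) (h₁ : (A : ℂ) * v = B * u)
    (h₂ : A * (‖v‖ ^ 2 + 1) = B * (‖u‖ ^ 2 + 1)) : u = v := by
  have hnorm : A ^ 2 * ‖v‖ ^ 2 = B ^ 2 * ‖u‖ ^ 2 := by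
    have := congrArg (‖·‖ ^ 2) h₁
    simpa only [norm_mul, norm_real, Real.norm_eq_abs, mul_pow, sq_abs] using this
  have hAB : A = B := by
    by_contra hne
    have hd : B - A ≠ 0 := sub_ne_zero.mpr (Ne.symm hne)
    have hu' : B * ‖u‖ ^ 2 = A := mul_left_cancel₀ hd (by linear_combination A * h₂ - hnorm)
    have hv' : A * ‖v‖ ^ 2 = B := mul_left_cancel₀ hd (by linear_combination B * h₂ - hnorm)
    have huv : ‖u‖ ^ 2 * ‖v‖ ^ 2 = 1 :=
      mul_left_cancel₀ (mul_ne_zero hA hB) (by linear_combination A * ‖v‖ ^ 2 * hu' + A * hv')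
    refine (mul_lt_one_of_nonneg_of_lt_one_left (sq_nonneg _) ?_ ?_).ne huv
    · exact pow_lt_one₀ (norm_nonneg u) hu two_ne_zero
    · exact pow_le_one₀ (norm_nonneg v) hv.le
  subst hAB
  exact (mul_left_cancel₀ (ofReal_ne_zero.mpr hA) h₁).symm

theorem eq_of_discPoisson_proportional {u v : ℂ} (hu : ‖u‖ < 1) (hv : ‖v‖ < 1) {a b : ℝ}
    (ha : a ≠ 0) (hb : b ≠ 0) {w : Fin 3 → ℂ} (hw : ∀ ℓ, ‖w ℓ‖ = 1)
    (hw_inj : Function.Injective w)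
    (h : ∀ ℓ, a * discPoisson u (w ℓ) = b * discPoisson v (w ℓ)) : u = v := by
  have hne : ∀ {x : ℂ}, ‖x‖ < 1 → ∀ ℓ, x ≠ w ℓ := fun hx ℓ hxw => by
    rw [hxw, hw ℓ] at hx; exact lt_irrefl 1 hx
  have hpos : ∀ {x : ℂ}, ‖x‖ < 1 → 1 - ‖x‖ ^ 2 ≠ 0 := fun hx =>
    (sub_pos.mpr (pow_lt_one₀ (norm_nonneg _) hx two_ne_zero)).ne'
  set A := a * (1 - ‖u‖ ^ 2)
  set B := b * (1 - ‖v‖ ^ 2)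
  have hquad : ∀ ℓ, ((B : ℂ) * conj u - A * conj v) * w ℓ ^ 2
      + (A * ((‖v‖ : ℂ) ^ 2 + 1) - B * ((‖u‖ : ℂ) ^ 2 + 1)) * w ℓ + (B * u - A * v) = 0 := by
    intro ℓ
    have hreal := mul_norm_sub_sq_eq_of_discPoisson_eq (hne hu ℓ) (hne hv ℓ) (h ℓ)
    have hcplx : (A : ℂ) * (w ℓ * (‖v - w ℓ‖ : ℂ) ^ 2) = B * (w ℓ * (‖u - w ℓ‖ : ℂ) ^ 2) := by
      have hreal' := congrArg ((↑) : ℝ → ℂ) hreal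
      push_cast [A, B] at hreal' ⊢
      linear_combination w ℓ * hreal'
    rw [mul_norm_sub_sq_of_norm_eq_one (hw ℓ), mul_norm_sub_sq_of_norm_eq_one (hw ℓ)] at hcplx
    linear_combination hcplx
  obtain ⟨-, hlin, hconst⟩ := eq_zero_of_quadratic_eq_zero_of_injective hw_inj hquad
  exact eq_of_mul_eq_of_mul_norm_sq_add_one_eq hu hv (mul_ne_zero ha (hpos hu))
    (mul_ne_zero hb (hpos hv)) (by linear_combination -hconst)
    (by exact_mod_cast sub_eq_zero.mp hlin)

theorem mapsTo_ball_of_injOn_closure {X Y : Type*} [TopologicalSpace X] [PseudoMetricSpace Y]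
    {Ω : Set X} (hΩ : IsOpen Ω) {F : X → Y} {c : Y} {r : ℝ}
    (hmaps : Set.MapsTo F (closure Ω) (closedBall c r)) (hinj : Set.InjOn F (closure Ω))
    (hbdry : F '' frontier Ω = sphere c r) : Set.MapsTo F Ω (ball c r) := by
  intro x hx
  have hcl := hmaps (subset_closure hx)
  rw [← ball_union_sphere] at hcl
  refine hcl.resolve_right ?_
  intro hs
  obtain ⟨q, hq, hqx⟩ := hbdry ▸ hs
  obtain rfl : q = x := hinj (frontier_subset_closure hq) (subset_closure hx) hqx
  exact (hΩ.inter_frontier_eq.subset ⟨hx, hq⟩ : q ∈ (∅ : Set X))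

theorem poisson_rigidity_general_domain_general
    (Ω : Set ℂ) (hΩopen : IsOpen Ω)
    (F : ℂ → ℂ)
    (hFbij : Set.BijOn F (closure Ω) (Metric.closedBall 0 1))
    (hFbdry : F '' frontier Ω = Metric.sphere (0 : ℂ) 1)
    (hF' : ∀ z ∈ closure Ω, deriv F z ≠ 0)
    (P : ℂ → ℂ → ℝ)
    (hP : ∀ x ∈ Ω, ∀ z ∈ frontier Ω,
      P x z = discPoisson (F x) (F z) * ‖deriv F z‖)
    (p ptilde : ℂ) (hp : p ∈ Ω) (hptilde : ptilde ∈ Ω)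
    (a b : ℝ) (ha : a ≠ 0) (hb : b ≠ 0)
    (z : Fin 3 → ℂ) (hz : ∀ ℓ, z ℓ ∈ frontier Ω)
    (hzdist : Function.Injective z)
    (heq : ∀ ℓ, a * P p (z ℓ) = b * P ptilde (z ℓ)) :
    p = ptilde := by
  have hzcl : ∀ ℓ, z ℓ ∈ closure Ω := fun ℓ => frontier_subset_closure (hz ℓ)
  have hball := mapsTo_ball_of_injOn_closure hΩopen hFbij.mapsTo hFbij.injOn hFbdry
  have hsphere : ∀ ℓ, ‖F (z ℓ)‖ = 1 := fun ℓ =>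
    mem_sphere_zero_iff_norm.mp (hFbdry ▸ Set.mem_image_of_mem F (hz ℓ))
  have hdisc : ∀ ℓ, a * discPoisson (F p) (F (z ℓ)) = b * discPoisson (F ptilde) (F (z ℓ)) := by
    intro ℓ
    refine mul_right_cancel₀ (norm_ne_zero_iff.mpr (hF' _ (hzcl ℓ))) ?_
    simpa only [hP p hp _ (hz ℓ), hP ptilde hptilde _ (hz ℓ), mul_assoc] using heq ℓ
  refine hFbij.injOn (subset_closure hp) (subset_closure hptilde) ?_
  exact eq_of_discPoisson_proportional (mem_ball_zero_iff.mp (hball hp))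
    (mem_ball_zero_iff.mp (hball hptilde)) ha hb hsphere
    (fun i j hij => hzdist (hFbij.injOn (hzcl i) (hzcl j) hij)) hdisc

/-- Three-point Poisson kernel rigidity on a bounded simply connected smooth plane
domain, via a conformal map `F` onto the unit disc (Kellogg–Warschawski) and the
transformation rule `P(x,z) = P₀(F x, F z) |F'(z)|`. -/
theorem poisson_rigidity_general_domain
    (Ω : Set ℂ) (hΩopen : IsOpen Ω) (hΩbdd : Bornology.IsBounded Ω)
    (F : ℂ → ℂ)
    (hFbij : Set.BijOn F (closure Ω) (Metric.closedBall 0 1))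
    (hFholo : DifferentiableOn ℂ F Ω)
    (hFbdry : F '' frontier Ω = Metric.sphere (0 : ℂ) 1)
    (hF' : ∀ z ∈ closure Ω, deriv F z ≠ 0)
    (P : ℂ → ℂ → ℝ)
    (hP : ∀ x ∈ Ω, ∀ z ∈ frontier Ω,
      P x z = discPoisson (F x) (F z) * ‖deriv F z‖)
    (p ptilde : ℂ) (hp : p ∈ Ω) (hptilde : ptilde ∈ Ω)
    (a b : ℝ) (ha : a ≠ 0) (hb : b ≠ 0)
    (z : Fin 3 → ℂ) (hz : ∀ ℓ, z ℓ ∈ frontier Ω)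
    (hzdist : Function.Injective z)
    (heq : ∀ ℓ, a * P p (z ℓ) = b * P ptilde (z ℓ)) :
    p = ptilde :=
  poisson_rigidity_general_domain_general Ω hΩopen F hFbij hFbdry hF' P hP p ptilde hp hptilde a b
    ha hb z hz hzdist heq
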